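/- arXiv:1410.7104 — 2 statements merged into one kernel-verified Lean document; each statement's English description precedes it below -/
import Mathlib

section
/- Let u be a C³ solution of the first heavenly equation u_{xt} u_{yz} - u_{xz} u_{yt} = 1, and let f''' = x u_x + y u_y - z u_z - t u_t. Then φ = f''' satisfies the linearized equation u_{xt} φ_{yz} + u_{yz} φ_{xt} - u_{xz} φ_{yt} - u_{yt} φ_{xz} = 0. -/
/-- Partial derivative on `ℝ⁴` with coordinates `(x,y,z,t) = (0,1,2,3)`. -/
noncomputable def pd (i : Fin 4) (f : (Fin 4 → ℝ) → ℝ) (p : Fin 4 → ℝ) : ℝ :=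
  fderiv ℝ f p (Pi.single i 1)

/-- Second partial derivative `f_{ij}`. -/
noncomputable def pdd (i j : Fin 4) (f : (Fin 4 → ℝ) → ℝ) : (Fin 4 → ℝ) → ℝ :=
  pd i (pd j f)

lemma pd_contDiff {f : (Fin 4 → ℝ) → ℝ} {n : ℕ∞} {m : ℕ∞} (hf : ContDiff ℝ n f)
    (h : (m : WithTop ℕ∞) + 1 ≤ (n : WithTop ℕ∞)) (i : Fin 4) : ContDiff ℝ m (pd i f) :=
  (hf.fderiv_right h).clm_apply contDiff_const

lemma pd_comm {f : (Fin 4 → ℝ) → ℝ} (hf : ContDiff ℝ 2 f) (i j : Fin 4) (p : Fin 4 → ℝ) :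
    pd i (pd j f) p = pd j (pd i f) p := by
  have hdf : Differentiable ℝ (fderiv ℝ f) :=
    (hf.fderiv_right (m := 1) (by norm_num)).differentiable (by norm_num)
  have hsym : IsSymmSndFDerivAt ℝ f p :=
    hf.contDiffAt.isSymmSndFDerivAt (by norm_num)
  have expand : ∀ (v w : Fin 4 → ℝ),
      fderiv ℝ (fun q => fderiv ℝ f q w) p v = fderiv ℝ (fderiv ℝ f) p v w := by
    intro v w
    rw [fderiv_clm_apply (hdf p) (differentiableAt_const w)]
    simp
  show fderiv ℝ (pd j f) p (Pi.single i 1) = fderiv ℝ (pd i f) p (Pi.single j 1)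
  unfold pd
  rw [expand, expand, hsym]

lemma hasFDerivAt_coord (k : Fin 4) (p : Fin 4 → ℝ) :
    HasFDerivAt (fun s : Fin 4 → ℝ => s k)
      (ContinuousLinearMap.proj k : (Fin 4 → ℝ) →L[ℝ] ℝ) p := by
  exact ContinuousLinearMap.hasFDerivAt (ContinuousLinearMap.proj k : (Fin 4 → ℝ) →L[ℝ] ℝ)

/-- Derivative of `s ↦ s0 h0 + s1 h1 - s2 h2 - s3 h3`. -/
lemma pd_quad (i : Fin 4) {h0 h1 h2 h3 : (Fin 4 → ℝ) → ℝ}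
    (d0 : Differentiable ℝ h0) (d1 : Differentiable ℝ h1)
    (d2 : Differentiable ℝ h2) (d3 : Differentiable ℝ h3) (p : Fin 4 → ℝ) :
    pd i (fun s => s 0 * h0 s + s 1 * h1 s - s 2 * h2 s - s 3 * h3 s) p
      = (Pi.single i 1 : Fin 4 → ℝ) 0 * h0 p + (Pi.single i 1 : Fin 4 → ℝ) 1 * h1 p
        - (Pi.single i 1 : Fin 4 → ℝ) 2 * h2 p - (Pi.single i 1 : Fin 4 → ℝ) 3 * h3 p
        + (p 0 * pd i h0 p + p 1 * pd i h1 p - p 2 * pd i h2 p - p 3 * pd i h3 p) := by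
  have H := ((((hasFDerivAt_coord 0 p).mul (d0 p).hasFDerivAt).add
      ((hasFDerivAt_coord 1 p).mul (d1 p).hasFDerivAt)).sub
      ((hasFDerivAt_coord 2 p).mul (d2 p).hasFDerivAt)).sub
      ((hasFDerivAt_coord 3 p).mul (d3 p).hasFDerivAt)
  unfold pd
  erw [H.fderiv]
  simp only [ContinuousLinearMap.add_apply, ContinuousLinearMap.sub_apply,
    ContinuousLinearMap.smul_apply, ContinuousLinearMap.proj_apply, smul_eq_mul]
  ring

/-- Derivative of `s ↦ c0 g0 + c1 g1 - c2 g2 - c3 g3 + (s0 h0 + s1 h1 - s2 h2 - s3 h3)`. -/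
lemma pd_mix (i : Fin 4) (c0 c1 c2 c3 : ℝ) {g0 g1 g2 g3 h0 h1 h2 h3 : (Fin 4 → ℝ) → ℝ}
    (e0 : Differentiable ℝ g0) (e1 : Differentiable ℝ g1)
    (e2 : Differentiable ℝ g2) (e3 : Differentiable ℝ g3)
    (d0 : Differentiable ℝ h0) (d1 : Differentiable ℝ h1)
    (d2 : Differentiable ℝ h2) (d3 : Differentiable ℝ h3) (p : Fin 4 → ℝ) :
    pd i (fun s => c0 * g0 s + c1 * g1 s - c2 * g2 s - c3 * g3 s
        + (s 0 * h0 s + s 1 * h1 s - s 2 * h2 s - s 3 * h3 s)) p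
      = c0 * pd i g0 p + c1 * pd i g1 p - c2 * pd i g2 p - c3 * pd i g3 p
        + ((Pi.single i 1 : Fin 4 → ℝ) 0 * h0 p + (Pi.single i 1 : Fin 4 → ℝ) 1 * h1 p
          - (Pi.single i 1 : Fin 4 → ℝ) 2 * h2 p - (Pi.single i 1 : Fin 4 → ℝ) 3 * h3 p)
        + (p 0 * pd i h0 p + p 1 * pd i h1 p - p 2 * pd i h2 p - p 3 * pd i h3 p) := by
  have H := (((((e0 p).hasFDerivAt.const_mul c0).add ((e1 p).hasFDerivAt.const_mul c1)).sub
      ((e2 p).hasFDerivAt.const_mul c2)).sub ((e3 p).hasFDerivAt.const_mul c3)).add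
      (((((hasFDerivAt_coord 0 p).mul (d0 p).hasFDerivAt).add
      ((hasFDerivAt_coord 1 p).mul (d1 p).hasFDerivAt)).sub
      ((hasFDerivAt_coord 2 p).mul (d2 p).hasFDerivAt)).sub
      ((hasFDerivAt_coord 3 p).mul (d3 p).hasFDerivAt))
  unfold pd
  erw [H.fderiv]
  simp only [ContinuousLinearMap.add_apply, ContinuousLinearMap.sub_apply,
    ContinuousLinearMap.smul_apply, ContinuousLinearMap.proj_apply, smul_eq_mul]
  ring

/-- If `u` is a `C³` solution of the first heavenly equation
`u_{xt} u_{yz} - u_{xz} u_{yt} = 1`, then `φ = x u_x + y u_y - z u_z - t u_t`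
satisfies the linearized equation
`u_{xt} φ_{yz} + u_{yz} φ_{xt} - u_{xz} φ_{yt} - u_{yt} φ_{xz} = 0`. -/
theorem first_heavenly_scaling_symmetry (u : (Fin 4 → ℝ) → ℝ)
    (hu : ContDiff ℝ 3 u)
    (heq : ∀ p, pdd 0 3 u p * pdd 1 2 u p - pdd 0 2 u p * pdd 1 3 u p = 1) :
    ∀ p, pdd 0 3 u p * pdd 1 2 (fun s => s 0 * pd 0 u s + s 1 * pd 1 u s - s 2 * pd 2 u s - s 3 * pd 3 u s) p
       + pdd 1 2 u p * pdd 0 3 (fun s => s 0 * pd 0 u s + s 1 * pd 1 u s - s 2 * pd 2 u s - s 3 * pd 3 u s) p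
       - pdd 0 2 u p * pdd 1 3 (fun s => s 0 * pd 0 u s + s 1 * pd 1 u s - s 2 * pd 2 u s - s 3 * pd 3 u s) p
       - pdd 1 3 u p * pdd 0 2 (fun s => s 0 * pd 0 u s + s 1 * pd 1 u s - s 2 * pd 2 u s - s 3 * pd 3 u s) p = 0 := by
  intro p
  have hu2 : ContDiff ℝ 2 u := hu.of_le (by norm_num)
  -- first derivatives are C², second derivatives are C¹, hence differentiable
  have hpd2 : ∀ k : Fin 4, ContDiff ℝ 2 (pd k u) := fun k => pd_contDiff hu (by norm_num) k
  have hpd1 : ∀ k : Fin 4, Differentiable ℝ (pd k u) :=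
    fun k => (hpd2 k).differentiable (by norm_num)
  have hpdd : ∀ j k : Fin 4, Differentiable ℝ (pd j (pd k u)) :=
    fun j k => ((pd_contDiff (hpd2 k) (by norm_num) j :
      ContDiff ℝ 1 (pd j (pd k u)))).differentiable (by simp)
  set φ : (Fin 4 → ℝ) → ℝ :=
    fun s => s 0 * pd 0 u s + s 1 * pd 1 u s - s 2 * pd 2 u s - s 3 * pd 3 u s with hφ
  -- step 1 : first derivative of φ
  have step1 : ∀ j : Fin 4, pd j φ = fun s =>
      (Pi.single j 1 : Fin 4 → ℝ) 0 * pd 0 u s + (Pi.single j 1 : Fin 4 → ℝ) 1 * pd 1 u s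
      - (Pi.single j 1 : Fin 4 → ℝ) 2 * pd 2 u s - (Pi.single j 1 : Fin 4 → ℝ) 3 * pd 3 u s
      + (s 0 * pd j (pd 0 u) s + s 1 * pd j (pd 1 u) s
        - s 2 * pd j (pd 2 u) s - s 3 * pd j (pd 3 u) s) := by
    intro j
    funext s
    exact pd_quad j (hpd1 0) (hpd1 1) (hpd1 2) (hpd1 3) s
  -- step 2 : second derivatives of φ
  have step2 : ∀ i j : Fin 4, pd i (pd j φ) p
      = (Pi.single j 1 : Fin 4 → ℝ) 0 * pd i (pd 0 u) p
        + (Pi.single j 1 : Fin 4 → ℝ) 1 * pd i (pd 1 u) p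
        - (Pi.single j 1 : Fin 4 → ℝ) 2 * pd i (pd 2 u) p
        - (Pi.single j 1 : Fin 4 → ℝ) 3 * pd i (pd 3 u) p
        + ((Pi.single i 1 : Fin 4 → ℝ) 0 * pd j (pd 0 u) p
          + (Pi.single i 1 : Fin 4 → ℝ) 1 * pd j (pd 1 u) p
          - (Pi.single i 1 : Fin 4 → ℝ) 2 * pd j (pd 2 u) p
          - (Pi.single i 1 : Fin 4 → ℝ) 3 * pd j (pd 3 u) p)
        + (p 0 * pd i (pd j (pd 0 u)) p + p 1 * pd i (pd j (pd 1 u)) p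
          - p 2 * pd i (pd j (pd 2 u)) p - p 3 * pd i (pd j (pd 3 u)) p) := by
    intro i j
    rw [step1 j]
    exact pd_mix i _ _ _ _ (hpd1 0) (hpd1 1) (hpd1 2) (hpd1 3)
      (hpdd j 0) (hpdd j 1) (hpdd j 2) (hpdd j 3) p
  -- reordering of third derivatives
  have reorder : ∀ i j k : Fin 4, pd i (pd j (pd k u)) p = pd k (pd i (pd j u)) p := by
    intro i j k
    have h1 : pd j (pd k u) = pd k (pd j u) := funext fun s => pd_comm hu2 j k s
    rw [h1]
    exact pd_comm (hpd2 j) i k p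
  -- differentiating the heavenly equation
  have hG : (fun q => pd 0 (pd 3 u) q * pd 1 (pd 2 u) q - pd 0 (pd 2 u) q * pd 1 (pd 3 u) q)
      = fun _ => (1 : ℝ) := funext fun q => heq q
  have hder : ∀ k : Fin 4,
      pd 0 (pd 3 u) p * pd k (pd 1 (pd 2 u)) p + pd 1 (pd 2 u) p * pd k (pd 0 (pd 3 u)) p
      - pd 0 (pd 2 u) p * pd k (pd 1 (pd 3 u)) p - pd 1 (pd 3 u) p * pd k (pd 0 (pd 2 u)) p
      = 0 := by
    intro k
    have H := (((hpdd 0 3 p).hasFDerivAt.mul (hpdd 1 2 p).hasFDerivAt).sub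
      ((hpdd 0 2 p).hasFDerivAt.mul (hpdd 1 3 p).hasFDerivAt))
    have hzero : pd k (fun q => pd 0 (pd 3 u) q * pd 1 (pd 2 u) q
        - pd 0 (pd 2 u) q * pd 1 (pd 3 u) q) p = 0 := by
      rw [hG]
      show fderiv ℝ (fun _ => (1:ℝ)) p (Pi.single k 1) = 0
      rw [fderiv_fun_const]
      simp
    have hval : pd k (fun q => pd 0 (pd 3 u) q * pd 1 (pd 2 u) q
        - pd 0 (pd 2 u) q * pd 1 (pd 3 u) q) p
        = pd 0 (pd 3 u) p * pd k (pd 1 (pd 2 u)) p + pd 1 (pd 2 u) p * pd k (pd 0 (pd 3 u)) p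
          - pd 0 (pd 2 u) p * pd k (pd 1 (pd 3 u)) p
          - pd 1 (pd 3 u) p * pd k (pd 0 (pd 2 u)) p := by
      show fderiv ℝ _ p (Pi.single k 1) = _
      erw [H.fderiv]
      show pd 0 (pd 3 u) p • fderiv ℝ (pd 1 (pd 2 u)) p (Pi.single k 1)
          + pd 1 (pd 2 u) p • fderiv ℝ (pd 0 (pd 3 u)) p (Pi.single k 1)
          - (pd 0 (pd 2 u) p • fderiv ℝ (pd 1 (pd 3 u)) p (Pi.single k 1)
            + pd 1 (pd 3 u) p • fderiv ℝ (pd 0 (pd 2 u)) p (Pi.single k 1)) = _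
      show _ = pd 0 (pd 3 u) p * fderiv ℝ (pd 1 (pd 2 u)) p (Pi.single k 1)
          + pd 1 (pd 2 u) p * fderiv ℝ (pd 0 (pd 3 u)) p (Pi.single k 1)
          - pd 0 (pd 2 u) p * fderiv ℝ (pd 1 (pd 3 u)) p (Pi.single k 1)
          - pd 1 (pd 3 u) p * fderiv ℝ (pd 0 (pd 2 u)) p (Pi.single k 1)
      simp only [smul_eq_mul]
      ring
    rw [← hval, hzero]
  -- cancellation of the first-order terms uses symmetry of second derivatives
  have sym12 : pd 2 (pd 1 u) p = pd 1 (pd 2 u) p := pd_comm hu2 2 1 p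
  have sym03 : pd 3 (pd 0 u) p = pd 0 (pd 3 u) p := pd_comm hu2 3 0 p
  have sym13 : pd 3 (pd 1 u) p = pd 1 (pd 3 u) p := pd_comm hu2 3 1 p
  have sym02 : pd 2 (pd 0 u) p = pd 0 (pd 2 u) p := pd_comm hu2 2 0 p
  show pd 0 (pd 3 u) p * pd 1 (pd 2 φ) p + pd 1 (pd 2 u) p * pd 0 (pd 3 φ) p
      - pd 0 (pd 2 u) p * pd 1 (pd 3 φ) p - pd 1 (pd 3 u) p * pd 0 (pd 2 φ) p = 0
  rw [step2 1 2, step2 0 3, step2 1 3, step2 0 2]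
  rw [reorder 1 2 0, reorder 1 2 1, reorder 1 2 2, reorder 1 2 3, reorder 0 3 0, reorder 0 3 1, reorder 0 3 2, reorder 0 3 3, reorder 1 3 0, reorder 1 3 1, reorder 1 3 2, reorder 1 3 3, reorder 0 2 0, reorder 0 2 1, reorder 0 2 2, reorder 0 2 3]
  rw [sym12, sym03, sym13, sym02]
  simp only [Pi.single_apply, Fin.reduceEq, if_true, if_false, one_mul, zero_mul, mul_zero,
    mul_one, add_zero, zero_add, sub_zero, zero_sub]
  linear_combination (p 0) * hder 0 + (p 1) * hder 1 - (p 2) * hder 2 - (p 3) * hder 3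
end

section
/- Let u be a C³ function satisfying the deformed modified heavenly equation u_{yt} - u_{xt} u_{zz} + u_{xz} u_{zt} = Q(t, u_t) · u_{zt} for a smooth function Q of two variables. For λ ∈ ℝ, define the vector fields V = -u_{zt} ∂_x + u_{xt} ∂_z + (λ + Q(t,u_t)) ∂_t and W = -u_{zz} ∂_x + ∂_y + (λ + u_{xz}) ∂_z. Then [V,W] lies pointwise in the span of V and W. -/
/-- Commutator of vector fields on `ℝ⁴`. -/
noncomputable def lie4 (V W : (Fin 4 → ℝ) → (Fin 4 → ℝ)) (p : Fin 4 → ℝ) : Fin 4 → ℝ :=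
  fderiv ℝ W p (V p) - fderiv ℝ V p (W p)

lemma contDiff_pd {n : WithTop ℕ∞} {f : (Fin 4 → ℝ) → ℝ} (hf : ContDiff ℝ (n + 1) f)
    (i : Fin 4) : ContDiff ℝ n (pd i f) :=
  (hf.fderiv_right le_rfl).clm_apply contDiff_const

lemma fderiv_pd_apply {f : (Fin 4 → ℝ) → ℝ} {p : Fin 4 → ℝ}
    (hf : DifferentiableAt ℝ (fderiv ℝ f) p) (j : Fin 4) (v : Fin 4 → ℝ) :
    fderiv ℝ (pd j f) p v = fderiv ℝ (fderiv ℝ f) p v (Pi.single j 1) := by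
  have : pd j f = fun q => (fderiv ℝ f q) ((fun _ : Fin 4 → ℝ => (Pi.single j 1 : Fin 4 → ℝ)) q) := rfl
  rw [this, fderiv_clm_apply hf (differentiableAt_const _)]
  simp

lemma pdd_comm {f : (Fin 4 → ℝ) → ℝ} (hf : ContDiff ℝ 2 f) (i j : Fin 4) (p : Fin 4 → ℝ) :
    pdd i j f p = pdd j i f p := by
  have hd : DifferentiableAt ℝ (fderiv ℝ f) p :=
    ((hf.fderiv_right (m := 1) (by norm_num)).differentiable one_ne_zero) p
  have hsymm := hf.contDiffAt.isSymmSndFDerivAt (x := p) (by norm_num)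
  show fderiv ℝ (pd j f) p (Pi.single i 1) = fderiv ℝ (pd i f) p (Pi.single j 1)
  rw [fderiv_pd_apply hd, fderiv_pd_apply hd]
  exact hsymm _ _

lemma fderiv_expand {f : (Fin 4 → ℝ) → ℝ} {p : Fin 4 → ℝ} (hf : DifferentiableAt ℝ f p)
    (v : Fin 4 → ℝ) : fderiv ℝ f p v = ∑ i, v i * pd i f p := by
  have hv : v = ∑ i, v i • (Pi.single i 1 : Fin 4 → ℝ) := by
    have : ∀ i, v i • (Pi.single i 1 : Fin 4 → ℝ) = Pi.single i (v i) := by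
      intro i; rw [← Pi.single_smul, smul_eq_mul, mul_one]
    simp_rw [this, Finset.univ_sum_single]
  conv_lhs => rw [hv, map_sum]
  simp [pd, smul_eq_mul]

lemma pd_neg {f : (Fin 4 → ℝ) → ℝ} (j : Fin 4) (p : Fin 4 → ℝ) :
    pd j (fun s => -(f s)) p = -(pd j f p) := by
  simp [pd, fderiv_neg]

lemma pd_const_add (c : ℝ) {f : (Fin 4 → ℝ) → ℝ} (j : Fin 4) (p : Fin 4 → ℝ) :
    pd j (fun s => c + f s) p = pd j f p := by
  simp [pd, fderiv_const_add]

lemma pd_const (c : ℝ) (j : Fin 4) (p : Fin 4 → ℝ) : pd j (fun _ => c) p = 0 := by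
  simp [pd]

lemma pd_mul {f g : (Fin 4 → ℝ) → ℝ} {p : Fin 4 → ℝ} (hf : DifferentiableAt ℝ f p)
    (hg : DifferentiableAt ℝ g p) (j : Fin 4) :
    pd j (fun s => f s * g s) p = pd j f p * g p + f p * pd j g p := by
  simp only [pd, fderiv_fun_mul hf hg, ContinuousLinearMap.add_apply, ContinuousLinearMap.smul_apply,
    smul_eq_mul]
  ring

lemma pd_sub {f g : (Fin 4 → ℝ) → ℝ} {p : Fin 4 → ℝ} (hf : DifferentiableAt ℝ f p)
    (hg : DifferentiableAt ℝ g p) (j : Fin 4) :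
    pd j (fun s => f s - g s) p = pd j f p - pd j g p := by
  simp [pd, fderiv_fun_sub hf hg]

lemma pd_add {f g : (Fin 4 → ℝ) → ℝ} {p : Fin 4 → ℝ} (hf : DifferentiableAt ℝ f p)
    (hg : DifferentiableAt ℝ g p) (j : Fin 4) :
    pd j (fun s => f s + g s) p = pd j f p + pd j g p := by
  simp [pd, fderiv_fun_add hf hg]

lemma fderiv_proj_apply {W : (Fin 4 → ℝ) → (Fin 4 → ℝ)} {p v : Fin 4 → ℝ}
    (hW : DifferentiableAt ℝ W p) (i : Fin 4) :
    fderiv ℝ W p v i = fderiv ℝ (fun s => W s i) p v := by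
  have h : (fun s => W s i) = (ContinuousLinearMap.proj i : (Fin 4 → ℝ) →L[ℝ] ℝ) ∘ W := rfl
  rw [h, fderiv_comp p (ContinuousLinearMap.differentiableAt _) hW, ContinuousLinearMap.fderiv]
  rfl

lemma pd_Qc {u : (Fin 4 → ℝ) → ℝ} {Q : ℝ → ℝ → ℝ} {p : Fin 4 → ℝ}
    (hu3 : Differentiable ℝ (pd 3 u)) (hQ : ContDiff ℝ (⊤ : ℕ∞) (Function.uncurry Q)) (j : Fin 4) :
    pd j (fun s => Q (s 3) (pd 3 u s)) p
      = fderiv ℝ (Function.uncurry Q) (p 3, pd 3 u p)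
          ((Pi.single j 1 : Fin 4 → ℝ) 3, pdd j 3 u p) := by
  have hproj : (fun s : Fin 4 → ℝ => s 3)
      = ⇑(ContinuousLinearMap.proj (R := ℝ) (φ := fun _ : Fin 4 => ℝ) 3) := rfl
  have hprojd : DifferentiableAt ℝ (fun s : Fin 4 → ℝ => s 3) p := by
    rw [hproj]; exact (ContinuousLinearMap.proj (R := ℝ) (φ := fun _ : Fin 4 => ℝ) 3).differentiableAt
  have hg : DifferentiableAt ℝ (fun s : Fin 4 → ℝ => ((s 3, pd 3 u s) : ℝ × ℝ)) p :=
    hprojd.prodMk (hu3 p)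
  have hQd : DifferentiableAt ℝ (Function.uncurry Q) (p 3, pd 3 u p) :=
    (hQ.differentiable (by simp)) _
  have hcomp : (fun s : Fin 4 → ℝ => Q (s 3) (pd 3 u s))
      = Function.uncurry Q ∘ (fun s : Fin 4 → ℝ => (s 3, pd 3 u s)) := rfl
  show fderiv ℝ _ p (Pi.single j 1) = _
  rw [hcomp, fderiv_comp p hQd hg, ContinuousLinearMap.comp_apply,
    DifferentiableAt.fderiv_prodMk hprojd (hu3 p), ContinuousLinearMap.prod_apply]
  congr 1
  rw [hproj, ContinuousLinearMap.fderiv]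
  rfl

/-- For a `C³` solution `u` of the deformed modified heavenly equation
`u_{yt} - u_{xt} u_{zz} + u_{xz} u_{zt} = Q(t,u_t) u_{zt}`, the Lax pair
`V = -u_{zt} ∂_x + u_{xt} ∂_z + (λ + Q) ∂_t`, `W = -u_{zz} ∂_x + ∂_y + (λ + u_{xz}) ∂_z`
satisfies `[V,W] ∈ span{V,W}` pointwise. -/
theorem deformed_modified_heavenly_lax (u : (Fin 4 → ℝ) → ℝ) (Q : ℝ → ℝ → ℝ) (lam : ℝ)
    (hu : ContDiff ℝ 3 u) (hQ : ContDiff ℝ (⊤ : ℕ∞) (Function.uncurry Q))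
    (heq : ∀ p, pdd 1 3 u p - pdd 0 3 u p * pdd 2 2 u p + pdd 0 2 u p * pdd 2 3 u p
        = Q (p 3) (pd 3 u p) * pdd 2 3 u p) :
    ∀ p, ∃ a c : ℝ,
      lie4
        (fun s => ![-(pdd 2 3 u s), 0, pdd 0 3 u s, lam + Q (s 3) (pd 3 u s)])
        (fun s => ![-(pdd 2 2 u s), 1, lam + pdd 0 2 u s, 0]) p
      = a • ![-(pdd 2 3 u p), 0, pdd 0 3 u p, lam + Q (p 3) (pd 3 u p)]
      + c • ![-(pdd 2 2 u p), 1, lam + pdd 0 2 u p, 0] := by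
  intro p
  -- differentiability facts
  have h31 : (3 : WithTop ℕ∞) = 2 + 1 := by norm_num
  have h21 : (2 : WithTop ℕ∞) = 1 + 1 := by norm_num
  have hu2 : ∀ j : Fin 4, ContDiff ℝ 2 (pd j u) := fun j => contDiff_pd (h31 ▸ hu) j
  have hu1 : ∀ i j : Fin 4, ContDiff ℝ 1 (pdd i j u) := fun i j => contDiff_pd (h21 ▸ hu2 j) i
  have hdd : ∀ i j : Fin 4, Differentiable ℝ (pdd i j u) := fun i j =>
    (hu1 i j).differentiable one_ne_zero
  have hd3 : Differentiable ℝ (pd 3 u) := (hu2 3).differentiable two_ne_zero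
  have hQcd : Differentiable ℝ (fun s : Fin 4 → ℝ => Q (s 3) (pd 3 u s)) := by
    intro q
    have hproj : (fun s : Fin 4 → ℝ => s 3)
        = ⇑(ContinuousLinearMap.proj (R := ℝ) (φ := fun _ : Fin 4 => ℝ) 3) := rfl
    have hprojd : DifferentiableAt ℝ (fun s : Fin 4 → ℝ => s 3) q := by
      rw [hproj]
      exact (ContinuousLinearMap.proj (R := ℝ) (φ := fun _ : Fin 4 => ℝ) 3).differentiableAt
    exact ((hQ.differentiable (by simp)) (q 3, pd 3 u q)).comp q (hprojd.prodMk (hd3 q))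
  -- abbreviations
  set D : ℝ × ℝ →L[ℝ] ℝ := fderiv ℝ (Function.uncurry Q) (p 3, pd 3 u p) with hDdef
  have hDsm : ∀ b : ℝ, D (0, b) = b * D (0, 1) := by
    intro b
    have : ((0, b) : ℝ × ℝ) = b • ((0, 1) : ℝ × ℝ) := by simp
    rw [this, map_smul, smul_eq_mul]
  -- derivatives of the Q-composition, for j ≠ 3
  have hpdQ : ∀ j : Fin 4, j ≠ 3 →
      pd j (fun s => Q (s 3) (pd 3 u s)) p = pdd j 3 u p * D (0, 1) := by
    intro j hj
    rw [pd_Qc hd3 hQ j]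
    have : (Pi.single j 1 : Fin 4 → ℝ) 3 = 0 := by
      rw [Pi.single_apply, if_neg (Ne.symm hj)]
    rw [this, ← hDdef, hDsm]
  -- differentiated heavenly equation
  have hE : ∀ j : Fin 4,
      pd j (pdd 1 3 u) p
        - (pd j (pdd 0 3 u) p * pdd 2 2 u p + pdd 0 3 u p * pd j (pdd 2 2 u) p)
        + (pd j (pdd 0 2 u) p * pdd 2 3 u p + pdd 0 2 u p * pd j (pdd 2 3 u) p)
        - (pd j (fun s => Q (s 3) (pd 3 u s)) p * pdd 2 3 u p
            + Q (p 3) (pd 3 u p) * pd j (pdd 2 3 u) p) = 0 := by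
    intro j
    have hzero : (fun q => pdd 1 3 u q - pdd 0 3 u q * pdd 2 2 u q
        + pdd 0 2 u q * pdd 2 3 u q - Q (q 3) (pd 3 u q) * pdd 2 3 u q) = fun _ => (0 : ℝ) := by
      funext q
      rw [heq q, sub_self]
    have h0 : pd j (fun q => pdd 1 3 u q - pdd 0 3 u q * pdd 2 2 u q
        + pdd 0 2 u q * pdd 2 3 u q - Q (q 3) (pd 3 u q) * pdd 2 3 u q) p = 0 := by
      rw [hzero, pd_const]
    rw [pd_sub (((hdd 1 3 p).fun_sub ((hdd 0 3 p).fun_mul (hdd 2 2 p))).fun_add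
          ((hdd 0 2 p).fun_mul (hdd 2 3 p))) ((hQcd p).fun_mul (hdd 2 3 p)),
        pd_add ((hdd 1 3 p).fun_sub ((hdd 0 3 p).fun_mul (hdd 2 2 p))) ((hdd 0 2 p).fun_mul (hdd 2 3 p)),
        pd_sub (hdd 1 3 p) ((hdd 0 3 p).fun_mul (hdd 2 2 p)),
        pd_mul (hdd 0 3 p) (hdd 2 2 p), pd_mul (hdd 0 2 p) (hdd 2 3 p),
        pd_mul (hQcd p) (hdd 2 3 p)] at h0
    linarith [h0]
  -- symmetry of third derivatives
  have S1 : ∀ k i j : Fin 4, pd k (pdd i j u) p = pd i (pdd k j u) p := fun k i j =>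
    pdd_comm (hu2 j) k i p
  have S2 : ∀ k i j : Fin 4, pd k (pdd i j u) p = pd k (pdd j i u) p := by
    intro k i j
    have : pdd i j u = pdd j i u := funext fun q => pdd_comm (hu.of_le (by norm_num)) i j q
    rw [this]
  -- differentiability of the vector fields
  have hVd : DifferentiableAt ℝ
      (fun s => ![-(pdd 2 3 u s), 0, pdd 0 3 u s, lam + Q (s 3) (pd 3 u s)]) p := by
    rw [differentiableAt_pi]
    intro i
    fin_cases i <;>
      simp only [Matrix.cons_val_zero, Matrix.cons_val_one, Matrix.head_cons,
        Matrix.cons_val_two, Matrix.tail_cons, Matrix.cons_val_three]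
    · exact (hdd 2 3 p).neg
    · exact differentiableAt_const _
    · exact hdd 0 3 p
    · exact (hQcd p).const_add lam
  have hWd : DifferentiableAt ℝ
      (fun s => ![-(pdd 2 2 u s), 1, lam + pdd 0 2 u s, 0]) p := by
    rw [differentiableAt_pi]
    intro i
    fin_cases i <;>
      simp only [Matrix.cons_val_zero, Matrix.cons_val_one, Matrix.head_cons,
        Matrix.cons_val_two, Matrix.tail_cons, Matrix.cons_val_three]
    · exact (hdd 2 2 p).neg
    · exact differentiableAt_const _
    · exact (hdd 0 2 p).const_add lam
    · exact differentiableAt_const _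
  refine ⟨-(D (0, 1) * pdd 2 3 u p), 0, ?_⟩
  funext i
  rw [lie4, Pi.sub_apply, fderiv_proj_apply hWd i, fderiv_proj_apply hVd i]
  fin_cases i <;>
    simp only [Fin.zero_eta, Fin.mk_one, Fin.reduceFinMk, Matrix.cons_val_zero,
      Matrix.cons_val_one, Matrix.head_cons, Matrix.cons_val_two, Matrix.tail_cons,
      Matrix.cons_val_three, Pi.add_apply, Pi.smul_apply, smul_eq_mul]
  -- component 0
  · rw [fderiv_expand ((hdd 2 2 p).fun_neg) _, fderiv_expand ((hdd 2 3 p).fun_neg) _,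
      Fin.sum_univ_four, Fin.sum_univ_four]
    simp only [Matrix.cons_val_zero, Matrix.cons_val_one, Matrix.head_cons,
      Matrix.cons_val_two, Matrix.tail_cons, Matrix.cons_val_three, pd_neg]
    rw [S1 0 2 2, show pd 3 (pdd 2 2 u) p = pd 2 (pdd 2 3 u) p from
        (S1 3 2 2).trans (S2 2 3 2), S1 0 2 3, S1 1 2 3]
    have := hE 2
    rw [hpdQ 2 (by decide)] at this
    linear_combination this
  -- component 1
  · rw [fderiv_expand (differentiableAt_const _) _, fderiv_expand (differentiableAt_const _) _,
      Fin.sum_univ_four, Fin.sum_univ_four]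
    simp only [pd_const]
    ring
  -- component 2
  · rw [fderiv_expand ((hdd 0 2 p).const_add lam) _, fderiv_expand (hdd 0 3 p) _,
      Fin.sum_univ_four, Fin.sum_univ_four]
    simp only [Matrix.cons_val_zero, Matrix.cons_val_one, Matrix.head_cons,
      Matrix.cons_val_two, Matrix.tail_cons, Matrix.cons_val_three, pd_const_add]
    rw [S1 2 0 2, show pd 3 (pdd 0 2 u) p = pd 0 (pdd 2 3 u) p from
        (S1 3 0 2).trans (congrArg _ rfl) |>.trans (S2 0 3 2),
      S1 1 0 3, S1 2 0 3]
    have := hE 0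
    rw [hpdQ 0 (by decide)] at this
    linear_combination -this
  -- component 3
  · rw [fderiv_expand (differentiableAt_const _) _,
      fderiv_expand ((hQcd p).const_add lam) _, Fin.sum_univ_four, Fin.sum_univ_four]
    simp only [Matrix.cons_val_zero, Matrix.cons_val_one, Matrix.head_cons,
      Matrix.cons_val_two, Matrix.tail_cons, Matrix.cons_val_three, pd_const, pd_const_add]
    rw [hpdQ 0 (by decide), hpdQ 1 (by decide), hpdQ 2 (by decide)]
    have := heq p
    linear_combination (-(D (0,1))) * this
end
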